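/- arXiv:math/0502106 — 4 statements merged into one kernel-verified Lean document; each statement's English description precedes it below -/
import Mathlib

section
/- If f and g are Riesz homomorphisms (lattice homomorphisms) from a Riesz space X to the reals, then the kernel of f - g is a Riesz subspace of X, i.e., it is closed under finite suprema and infima. -/
theorem map_inf_of_map_sup {α β F : Type*} [Lattice α] [AddCommGroup α] [AddLeftMono α]
    [Lattice β] [AddCommGroup β] [AddLeftMono β] [FunLike F α β] [AddMonoidHomClass F α β]
    (f : F) (hf : ∀ x y : α, f (x ⊔ y) = f x ⊔ f y) (x y : α) :
    f (x ⊓ y) = f x ⊓ f y := by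
  have h : f (x ⊓ y) + f (x ⊔ y) = (f x ⊓ f y) + (f x ⊔ f y) := by
    rw [← map_add, inf_add_sup, map_add, inf_add_sup]
  rwa [hf, add_left_inj] at h

theorem stmt0 {X : Type*} [Lattice X] [AddCommGroup X] [Module ℝ X]
    [CovariantClass X X (· + ·) (· ≤ ·)]
    (f g : X →ₗ[ℝ] ℝ)
    (hf : ∀ x y : X, f (x ⊔ y) = f x ⊔ f y)
    (hg : ∀ x y : X, g (x ⊔ y) = g x ⊔ g y)
    (x y : X) (hx : f x = g x) (hy : f y = g y) :
    f (x ⊔ y) = g (x ⊔ y) ∧ f (x ⊓ y) = g (x ⊓ y) := by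
  constructor
  · rw [hf, hg, hx, hy]
  · rw [map_inf_of_map_sup f hf, map_inf_of_map_sup g hg, hx, hy]
end

section
/- Let Q be a compact Hausdorff space. Every closed Riesz subspace of C(Q, ℝ) is the intersection of kernels of differences of Riesz homomorphisms; more precisely, if V is a norm-closed Riesz subspace of C(Q, ℝ), then V = {u : f(u) = g(u) for all pairs (f, g) of Riesz homomorphisms C(Q, ℝ) → ℝ that agree on V}. (Stone Theorem) -/
/-!
The inclusion `V ⊆ {…}` is trivial. Conversely, if `u` is not separated from `V` by any pair of
Riesz homomorphisms, then at every pair of points `x, y` the vector `(u x, u y)` lies in the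
image of `V` under evaluation at `x` and `y`: that image is a Riesz subspace of `ℝ²`, and such a
subspace is cut out by pairs of Riesz functionals `c • fst`, `d • snd` with `c, d ≥ 0`, which
come from the Riesz homomorphisms `c • δ_x`, `d • δ_y` on `C(Q, ℝ)`. So `V` interpolates `u` at
every pair of points, and the Kakutani–Stone argument puts `u` in the closure of `V`.
-/

open scoped Topology Pointwise

theorem Submodule.eq_top_of_det_ne_zero {W : Submodule ℝ (ℝ × ℝ)} {v w : ℝ × ℝ}
    (hv : v ∈ W) (hw : w ∈ W) (hdet : v.1 * w.2 - v.2 * w.1 ≠ 0) : W = ⊤ := by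
  refine eq_top_iff'.mpr fun p => ?_
  have hp : p = ((p.1 * w.2 - p.2 * w.1) / (v.1 * w.2 - v.2 * w.1)) • v
      + ((v.1 * p.2 - v.2 * p.1) / (v.1 * w.2 - v.2 * w.1)) • w := by
    ext <;> simp only [Prod.fst_add, Prod.snd_add, Prod.smul_fst, Prod.smul_snd, smul_eq_mul] <;>
      rw [div_mul_eq_mul_div, div_mul_eq_mul_div, ← add_div, eq_div_iff hdet] <;> ring
  exact hp ▸ W.add_mem (W.smul_mem _ hv) (W.smul_mem _ hw)

theorem Submodule.prod_mem_of_forall_mul_fst_eq_mul_snd {W : Submodule ℝ (ℝ × ℝ)}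
    (habs : ∀ w ∈ W, |w| ∈ W) {p : ℝ × ℝ}
    (hp : ∀ c d : ℝ, 0 ≤ c → 0 ≤ d → (∀ w ∈ W, c * w.1 = d * w.2) → c * p.1 = d * p.2) :
    p ∈ W := by
  -- `W` is all of `ℝ²`, or the line through the positive vector `|w|`, or `0`.
  by_cases hW : ∃ w ∈ W, w ≠ 0
  · obtain ⟨w, hwW, hw0⟩ := hW
    set a := |w.1|
    set b := |w.2|
    have hab : (a, b) ∈ W := by
      convert habs w hwW using 1
      ext <;> simp [a, b, abs]
    by_cases hdet : ∃ v ∈ W, a * v.2 - b * v.1 ≠ 0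
    · obtain ⟨v, hvW, hdet⟩ := hdet
      rw [eq_top_of_det_ne_zero hab hvW hdet]
      exact mem_top
    push Not at hdet
    have hbp : b * p.1 = a * p.2 :=
      hp b a (abs_nonneg _) (abs_nonneg _) fun v hv => by linarith [hdet v hv]
    have hab0 : a ≠ 0 ∨ b ≠ 0 := by
      by_contra! h
      exact hw0 (Prod.ext (abs_eq_zero.mp h.1) (abs_eq_zero.mp h.2))
    rcases hab0 with ha | hb
    · convert W.smul_mem (p.1 / a) hab using 1
      ext
      · simp [ha]
      · simp only [Prod.smul_snd, smul_eq_mul]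
        rw [div_mul_eq_mul_div, eq_div_iff ha]
        linarith
    · convert W.smul_mem (p.2 / b) hab using 1
      ext
      · simp only [Prod.smul_fst, smul_eq_mul]
        rw [div_mul_eq_mul_div, eq_div_iff hb]
        linarith
      · simp [hb]
  push Not at hW
  have h1 := hp 1 0 zero_le_one le_rfl fun w hw => by simp [hW w hw]
  have h2 := hp 0 1 le_rfl zero_le_one fun w hw => by simp [hW w hw]
  convert W.zero_mem
  ext <;> simp_all

namespace ContinuousMap

variable {X : Type*} [TopologicalSpace X]

theorem smul_evalCLM_map_sup {c : ℝ} (hc : 0 ≤ c) (x : X) (f g : C(X, ℝ)) :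
    (c • (evalCLM (M := ℝ) ℝ x).toLinearMap) (f ⊔ g) =
      (c • (evalCLM (M := ℝ) ℝ x).toLinearMap) f ⊔ (c • (evalCLM (M := ℝ) ℝ x).toLinearMap) g := by
  simp [mul_max_of_nonneg _ _ hc]

theorem exists_mem_eq_eq_of_forall_map_sup_eq {V : Submodule ℝ C(X, ℝ)}
    (habs : ∀ v ∈ V, |v| ∈ V) {u : C(X, ℝ)}
    (hu : ∀ f g : C(X, ℝ) →ₗ[ℝ] ℝ, (∀ v w, f (v ⊔ w) = f v ⊔ f w) →
      (∀ v w, g (v ⊔ w) = g v ⊔ g w) → (∀ v ∈ V, f v = g v) → f u = g u)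
    (x y : X) : ∃ v ∈ V, v x = u x ∧ v y = u y := by
  let E : C(X, ℝ) →ₗ[ℝ] ℝ × ℝ :=
    (evalCLM (M := ℝ) ℝ x).toLinearMap.prod (evalCLM (M := ℝ) ℝ y).toLinearMap
  have hEu : E u ∈ V.map E := by
    refine Submodule.prod_mem_of_forall_mul_fst_eq_mul_snd ?_ fun c d hc hd hV => ?_
    · rintro _ ⟨v, hv, rfl⟩
      exact ⟨|v|, habs v hv, by ext <;> simp [E, abs]⟩
    · exact hu _ _ (smul_evalCLM_map_sup hc x) (smul_evalCLM_map_sup hd y)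
        fun v hv => hV (E v) ⟨v, hv, rfl⟩
  obtain ⟨v, hv, hvu⟩ := hEu
  exact ⟨v, hv, congrArg Prod.fst hvu, congrArg Prod.snd hvu⟩

variable [CompactSpace X]

theorem exists_mem_forall_lt_of_sup_mem [Nonempty X] {L : Set C(X, ℝ)}
    (sup_mem : ∀ f ∈ L, ∀ g ∈ L, f ⊔ g ∈ L) (φ : C(X, ℝ))
    (h : ∀ y, ∃ g ∈ L, φ y < g y) : ∃ g ∈ L, ∀ z, φ z < g z := by
  choose g hgL hlt using h
  have hnhds : ∀ y, {z | φ z < g y z} ∈ 𝓝 y := fun y =>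
    (isOpen_lt (by fun_prop) (by fun_prop)).mem_nhds (hlt y)
  obtain ⟨t, ht⟩ := CompactSpace.elim_nhds_subcover _ hnhds
  have hne : t.Nonempty := by
    simpa using Set.nonempty_of_union_eq_top_of_nonempty _ _ inferInstance ht
  refine ⟨t.sup' hne g, Finset.sup'_mem L sup_mem t hne g fun y _ => hgL y, fun z => ?_⟩
  obtain ⟨y, hyt, hz⟩ := Set.exists_set_mem_of_union_eq_top _ _ ht z
  rw [sup'_apply, Finset.lt_sup'_iff]
  exact ⟨y, hyt, hz⟩

theorem exists_mem_forall_gt_of_inf_mem [Nonempty X] {L : Set C(X, ℝ)}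
    (inf_mem : ∀ f ∈ L, ∀ g ∈ L, f ⊓ g ∈ L) (φ : C(X, ℝ))
    (h : ∀ y, ∃ g ∈ L, g y < φ y) : ∃ g ∈ L, ∀ z, g z < φ z := by
  have sup_mem : ∀ f ∈ -L, ∀ g ∈ -L, f ⊔ g ∈ -L := fun f hf g hg => by
    simpa [Set.mem_neg, neg_sup] using inf_mem _ hf _ hg
  obtain ⟨g, hgL, hlt⟩ := exists_mem_forall_lt_of_sup_mem sup_mem (-φ) fun y => by
    obtain ⟨g, hgL, hlt⟩ := h y
    exact ⟨-g, by simpa [Set.mem_neg] using hgL, by simpa using hlt⟩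
  exact ⟨-g, Set.mem_neg.mp hgL, fun z => by simpa [neg_lt] using hlt z⟩

theorem mem_closure_of_forall_exists_eq_eq {L : Set C(X, ℝ)} (hL : L.Nonempty)
    (inf_mem : ∀ f ∈ L, ∀ g ∈ L, f ⊓ g ∈ L)
    (sup_mem : ∀ f ∈ L, ∀ g ∈ L, f ⊔ g ∈ L) {f : C(X, ℝ)}
    (h : ∀ x y, ∃ g ∈ L, g x = f x ∧ g y = f y) : f ∈ closure L := by
  cases isEmpty_or_nonempty X
  · exact subset_closure (Subsingleton.elim hL.some f ▸ hL.some_mem)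
  refine Metric.mem_closure_iff.mpr fun ε hε => ?_
  -- Both steps of Kakutani's argument pass to a sub-lattice of `L` that keeps the constraint
  -- already achieved: `g x = f x` under `⊔`, then `f - ε < g` under `⊓`.
  have above : ∀ x, ∃ g ∈ L, g x = f x ∧ ∀ z, f z - ε < g z := fun x => by
    have sup_mem_x : ∀ g ∈ {g ∈ L | g x = f x}, ∀ g' ∈ {g ∈ L | g x = f x},
        g ⊔ g' ∈ {g ∈ L | g x = f x} := fun g hg g' hg' =>
      ⟨sup_mem g hg.1 g' hg'.1, by simp [hg.2, hg'.2]⟩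
    obtain ⟨g, ⟨hgL, hgx⟩, hlt⟩ := exists_mem_forall_lt_of_sup_mem sup_mem_x
      (f - const X ε) fun y => by
        obtain ⟨g, hgL, hgx, hgy⟩ := h x y
        exact ⟨g, ⟨hgL, hgx⟩, by simp [hgy, hε]⟩
    exact ⟨g, hgL, hgx, by simpa using hlt⟩
  have inf_mem_above : ∀ g ∈ {g ∈ L | ∀ z, f z - ε < g z}, ∀ g' ∈ {g ∈ L | ∀ z, f z - ε < g z},
      g ⊓ g' ∈ {g ∈ L | ∀ z, f z - ε < g z} := fun g hg g' hg' =>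
    ⟨inf_mem g hg.1 g' hg'.1, fun z => lt_min (hg.2 z) (hg'.2 z)⟩
  obtain ⟨g, ⟨hgL, hgt⟩, hlt⟩ := exists_mem_forall_gt_of_inf_mem inf_mem_above
    (f + const X ε) fun x => by
      obtain ⟨g, hgL, hgx, hgt⟩ := above x
      exact ⟨g, ⟨hgL, hgt⟩, by simp [hgx, hε]⟩
  refine ⟨g, hgL, (dist_lt_iff hε).mpr fun z => ?_⟩
  rw [Real.dist_eq, abs_sub_lt_iff]
  have hupper : g z < f z + ε := by simpa using hlt z
  exact ⟨by linarith [hgt z], by linarith⟩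

end ContinuousMap

theorem stmt5_general {Q : Type*} [TopologicalSpace Q] [CompactSpace Q]
    (V : Submodule ℝ C(Q, ℝ)) (hVc : IsClosed (V : Set C(Q, ℝ)))
    (hVlat : ∀ u ∈ V, ∀ v ∈ V, u ⊔ v ∈ V ∧ u ⊓ v ∈ V) :
    (V : Set C(Q, ℝ)) =
      {u : C(Q, ℝ) | ∀ f g : C(Q, ℝ) →ₗ[ℝ] ℝ,
        (∀ x y : C(Q, ℝ), f (x ⊔ y) = f x ⊔ f y) →
        (∀ x y : C(Q, ℝ), g (x ⊔ y) = g x ⊔ g y) →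
        (∀ v ∈ V, f v = g v) → f u = g u} := by
  refine Set.Subset.antisymm (fun u hu f g _ _ hfg => hfg u hu) fun u hu => ?_
  have habs : ∀ v ∈ V, |v| ∈ V := fun v hv => (hVlat v hv (-v) (V.neg_mem hv)).1
  rw [← hVc.closure_eq]
  exact ContinuousMap.mem_closure_of_forall_exists_eq_eq ⟨0, V.zero_mem⟩
    (fun v hv w hw => (hVlat v hv w hw).2) (fun v hv w hw => (hVlat v hv w hw).1)
    (ContinuousMap.exists_mem_eq_eq_of_forall_map_sup_eq habs hu)

/-- Stone Theorem: a norm-closed Riesz subspace of `C(Q, ℝ)` is the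
intersection of the equality sets of all pairs of real Riesz homomorphisms
agreeing on it. -/
theorem stmt5 {Q : Type*} [TopologicalSpace Q] [CompactSpace Q] [T2Space Q]
    (V : Submodule ℝ C(Q, ℝ)) (hVc : IsClosed (V : Set C(Q, ℝ)))
    (hVlat : ∀ u ∈ V, ∀ v ∈ V, u ⊔ v ∈ V ∧ u ⊓ v ∈ V) :
    (V : Set C(Q, ℝ)) =
      {u : C(Q, ℝ) | ∀ f g : C(Q, ℝ) →ₗ[ℝ] ℝ,
        (∀ x y : C(Q, ℝ), f (x ⊔ y) = f x ⊔ f y) →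
        (∀ x y : C(Q, ℝ), g (x ⊔ y) = g x ⊔ g y) →
        (∀ v ∈ V, f v = g v) → f u = g u} :=
  stmt5_general V hVc hVlat
end

section
/- Let X and Y be Riesz spaces with Y Dedekind complete, and let S, T : X → Y be Riesz homomorphisms. Then for every band projection π on Y, the kernel of the operator π ∘ (S - T) is a Riesz subspace of X. -/
/-- For Riesz homomorphisms `S T : X → Y` into a Dedekind complete Riesz space
and any band projection `π` on `Y`, the kernel of `π ∘ (S - T)` is a Riesz
subspace of `X`. -/
theorem stmt8 {X Y : Type*}
    [Lattice X] [AddCommGroup X] [Module ℝ X] [CovariantClass X X (· + ·) (· ≤ ·)]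
    [Lattice Y] [AddCommGroup Y] [Module ℝ Y] [CovariantClass Y Y (· + ·) (· ≤ ·)]
    (hDC : ∀ s : Set Y, s.Nonempty → BddAbove s → ∃ b : Y, IsLUB s b)
    (S T : X →ₗ[ℝ] Y)
    (hS : ∀ x y : X, S (x ⊔ y) = S x ⊔ S y)
    (hT : ∀ x y : X, T (x ⊔ y) = T x ⊔ T y)
    (π : Y →ₗ[ℝ] Y)
    (hidem : ∀ y : Y, π (π y) = π y)
    (hband : ∀ y : Y, 0 ≤ y → 0 ≤ π y ∧ π y ≤ y) :
    ∀ x y : X, π (S x - T x) = 0 → π (S y - T y) = 0 →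
      π (S (x ⊔ y) - T (x ⊔ y)) = 0 ∧ π (S (x ⊓ y) - T (x ⊓ y)) = 0 := by
  intro x y hx hy
  -- monotonicity of π
  have hmono : ∀ u v : Y, u ≤ v → π u ≤ π v := by
    intro u v h
    have h0 : (0:Y) ≤ π (v - u) := (hband _ (sub_nonneg.2 h)).1
    rw [map_sub] at h0
    exact sub_nonneg.1 h0
  -- π commutes with |·|
  have habs : ∀ a : Y, π |a| = |π a| := by
    intro a
    have hp : (0:Y) ≤ π (a⁺) := (hband _ (posPart_nonneg a)).1
    have hn : (0:Y) ≤ π (a⁻) := (hband _ (negPart_nonneg a)).1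
    have hdisj : π (a⁺) ⊓ π (a⁻) = 0 := by
      refine le_antisymm ?_ (le_inf hp hn)
      calc π (a⁺) ⊓ π (a⁻) ≤ a⁺ ⊓ a⁻ :=
            inf_le_inf (hband _ (posPart_nonneg a)).2 (hband _ (negPart_nonneg a)).2
        _ = 0 := posPart_inf_negPart_eq_zero a
    have h1 : π |a| = π (a⁺) + π (a⁻) := by
      rw [← posPart_add_negPart a, map_add]
    have h2 : π a = π (a⁺) - π (a⁻) := by
      rw [← map_sub, posPart_sub_negPart a]
    have h3 : |π a| = π (a⁺) ⊔ π (a⁻) - π (a⁺) ⊓ π (a⁻) := by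
      rw [h2, ← sup_sub_inf_eq_abs_sub (π (a⁻)) (π (a⁺)), sup_comm, inf_comm]
    have h4 : π (a⁺) ⊓ π (a⁻) + π (a⁺) ⊔ π (a⁻) = π (a⁺) + π (a⁻) := inf_add_sup _ _
    rw [h1, h3, hdisj, sub_zero, ← h4, hdisj, zero_add]
  -- S and T preserve inf
  have hSinf : ∀ a b : X, S (a ⊓ b) = S a ⊓ S b := by
    intro a b
    have h0 : a ⊓ b = a + b - a ⊔ b := by rw [← inf_add_sup a b]; abel
    rw [h0, map_sub, map_add, hS, ← inf_add_sup (S a) (S b)]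
    abel
  have hTinf : ∀ a b : X, T (a ⊓ b) = T a ⊓ T b := by
    intro a b
    have h0 : a ⊓ b = a + b - a ⊔ b := by rw [← inf_add_sup a b]; abel
    rw [h0, map_sub, map_add, hT, ← inf_add_sup (T a) (T b)]
    abel
  -- generic finisher
  have key : ∀ u : Y, |u| ≤ |S x - T x| + |S y - T y| → π u = 0 := by
    intro u hu
    have h1 : π |u| ≤ π (|S x - T x| + |S y - T y|) := hmono _ _ hu
    have h2 : π (|S x - T x| + |S y - T y|) = |π (S x - T x)| + |π (S y - T y)| := by
      rw [map_add, habs, habs]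
    rw [h2, hx, hy, abs_zero, add_zero, habs] at h1
    have ha : π u ≤ 0 := le_trans (le_abs_self _) h1
    have hb : -π u ≤ 0 := le_trans (neg_le_abs _) h1
    exact le_antisymm ha (by simpa using hb)
  constructor
  · refine key _ ?_
    rw [hS, hT]
    have e : S x ⊔ S y - T x ⊔ T y
        = (S x ⊔ S y - T x ⊔ S y) + (T x ⊔ S y - T x ⊔ T y) := by abel
    have h5 : |T x ⊔ S y - T x ⊔ T y| ≤ |S y - T y| := by
      rw [sup_comm (T x) (S y), sup_comm (T x) (T y)]
      exact abs_sup_sub_sup_le_abs _ _ _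
    calc |S x ⊔ S y - T x ⊔ T y|
        ≤ |S x ⊔ S y - T x ⊔ S y| + |T x ⊔ S y - T x ⊔ T y| := by rw [e]; exact abs_add_le _ _
      _ ≤ |S x - T x| + |S y - T y| := add_le_add (abs_sup_sub_sup_le_abs _ _ _) h5
  · refine key _ ?_
    rw [hSinf, hTinf]
    have e : S x ⊓ S y - T x ⊓ T y
        = (S x ⊓ S y - T x ⊓ S y) + (T x ⊓ S y - T x ⊓ T y) := by abel
    have h5 : |T x ⊓ S y - T x ⊓ T y| ≤ |S y - T y| := by
      rw [inf_comm (T x) (S y), inf_comm (T x) (T y)]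
      exact abs_inf_sub_inf_le_abs _ _ _
    calc |S x ⊓ S y - T x ⊓ T y|
        ≤ |S x ⊓ S y - T x ⊓ S y| + |T x ⊓ S y - T x ⊓ T y| := by rw [e]; exact abs_add_le _ _
      _ ≤ |S x - T x| + |S y - T y| := add_le_add (abs_inf_sub_inf_le_abs _ _ _) h5
end

section
/- Let X be a Riesz space and let f, g : X → ℝ be Riesz homomorphisms. Then |f - g| (the modulus of f - g in the order dual of X) equals f + g - 2(f ∧ g), and f ∧ g is a Riesz homomorphism. In particular, the positive and negative parts of a difference of Riesz homomorphisms are Riesz homomorphisms. -/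
/-!
A Riesz homomorphism `f : X → ℝ` is positive and maps `|x|` to `|f x|`, so its kernel is
determined by the positive elements it kills. Hence for two Riesz homomorphisms `f`, `g` either
some `z ≥ 0` has `f z = 0 < g z`, and then truncating `x ≥ 0` by multiples of `z` shows
`f ⊓ g = 0`; or `ker f ≤ ker g`, so `g = c • f` and `f ⊓ g` is whichever of `f`, `g` is smaller.
In both cases `f ⊓ g`, `f - f ⊓ g`, `g - f ⊓ g` are Riesz homomorphisms and the infimum in the
Riesz–Kantorovich formula is attained, which also yields the formula for `|f - g|`.
-/

theorem LinearMap.exists_eq_smul_of_ker_le {K E : Type*} [Field K] [AddCommGroup E] [Module K E]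
    {f g : E →ₗ[K] K} (h : LinearMap.ker f ≤ LinearMap.ker g) : ∃ c : K, g = c • f := by
  have := mem_span_of_iInf_ker_le_ker (L := fun _ : Unit => f) (K := g) (by simpa using h)
  rw [Set.range_const, Submodule.mem_span_singleton] at this
  exact this.imp fun _ => Eq.symm

section

variable {X : Type*} [Lattice X] [AddCommGroup X] [Module ℝ X]

def IsRieszHom (f : X →ₗ[ℝ] ℝ) : Prop :=
  ∀ x y : X, f (x ⊔ y) = f x ⊔ f y

namespace IsRieszHom

variable {f g : X →ₗ[ℝ] ℝ}

theorem zero : IsRieszHom (0 : X →ₗ[ℝ] ℝ) := by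
  simp [IsRieszHom]

theorem smul (hf : IsRieszHom f) {c : ℝ} (hc : 0 ≤ c) : IsRieszHom (c • f) := by
  intro x y
  simp only [LinearMap.smul_apply, hf x y, smul_eq_mul, mul_max_of_nonneg _ _ hc]

theorem monotone (hf : IsRieszHom f) : Monotone f := by
  intro x y hxy
  rw [← sup_eq_right.2 hxy, hf]
  exact le_sup_left

theorem map_abs (hf : IsRieszHom f) (x : X) : f |x| = |f x| := by
  rw [abs, hf, map_neg]
  rfl

theorem map_nonneg (hf : IsRieszHom f) {x : X} (hx : 0 ≤ x) : 0 ≤ f x := by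
  simpa using hf.monotone hx

variable [CovariantClass X X (· + ·) (· ≤ ·)]

theorem map_inf (hf : IsRieszHom f) (x y : X) : f (x ⊓ y) = f x ⊓ f y := by
  rw [← neg_neg (x ⊓ y), neg_inf, map_neg, hf, map_neg, map_neg, neg_sup, neg_neg, neg_neg]

theorem ker_le_ker (hf : IsRieszHom f) (hg : IsRieszHom g)
    (h : ∀ z, 0 ≤ z → f z = 0 → g z = 0) : LinearMap.ker f ≤ LinearMap.ker g := by
  intro w hw
  rw [LinearMap.mem_ker] at hw ⊢
  rw [← abs_eq_zero, ← hg.map_abs]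
  exact h |w| (abs_nonneg w) (by rw [hf.map_abs, hw, abs_zero])

/-- Archimedean truncation: `w = x ⊓ n • z` with `g x ≤ n * g z`. -/
theorem exists_le_map_eq_zero_map_eq (hf : IsRieszHom f) (hg : IsRieszHom g) {z : X}
    (hz : 0 ≤ z) (hfz : f z = 0) (hgz : 0 < g z) {x : X} (hx : 0 ≤ x) :
    ∃ w, 0 ≤ w ∧ w ≤ x ∧ f w = 0 ∧ g w = g x := by
  obtain ⟨n, hn⟩ := exists_nat_ge (g x / g z)
  refine ⟨x ⊓ n • z, le_inf hx (nsmul_nonneg hz n), inf_le_left, ?_, ?_⟩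
  · rw [hf.map_inf, map_nsmul, hfz, smul_zero]
    exact inf_eq_right.2 (hf.map_nonneg hx)
  · rw [hg.map_inf, map_nsmul, nsmul_eq_mul]
    exact inf_eq_left.2 ((div_le_iff₀ hgz).1 hn)

end IsRieszHom

/-- `m` plays the role of `f ⊓ g` in the order dual, `f - m` and `g - m` that of `(f - g)⁺` and
`(f - g)⁻`. -/
structure IsRieszInf (f g m : X →ₗ[ℝ] ℝ) : Prop where
  isRieszHom : IsRieszHom m
  isRieszHom_sub_left : IsRieszHom (f - m)
  isRieszHom_sub_right : IsRieszHom (g - m)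
  exists_add_map_sub_eq : ∀ x, 0 ≤ x → ∃ w, 0 ≤ w ∧ w ≤ x ∧ f w + g (x - w) = m x

namespace IsRieszInf

variable [CovariantClass X X (· + ·) (· ≤ ·)] {f g m : X →ₗ[ℝ] ℝ}

theorem symm (h : IsRieszInf f g m) : IsRieszInf g f m where
  isRieszHom := h.isRieszHom
  isRieszHom_sub_left := h.isRieszHom_sub_right
  isRieszHom_sub_right := h.isRieszHom_sub_left
  exists_add_map_sub_eq x hx := by
    obtain ⟨w, hw, hwx, hm⟩ := h.exists_add_map_sub_eq x hx
    exact ⟨x - w, sub_nonneg.2 hwx, sub_le_self x hw, by rw [sub_sub_cancel, ← hm, add_comm]⟩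

theorem isGLB (h : IsRieszInf f g m) {x : X} (hx : 0 ≤ x) :
    IsGLB {r : ℝ | ∃ y : X, 0 ≤ y ∧ y ≤ x ∧ f y + g (x - y) = r} (m x) := by
  refine ⟨?_, fun b hb => hb (h.exists_add_map_sub_eq x hx)⟩
  rintro _ ⟨y, hy, hyx, rfl⟩
  have hfy := h.isRieszHom_sub_left.map_nonneg hy
  have hgy := h.isRieszHom_sub_right.map_nonneg (sub_nonneg.2 hyx)
  simp only [LinearMap.sub_apply, map_sub] at hfy hgy ⊢
  linarith

theorem isLUB (h : IsRieszInf f g m) {x : X} (hx : 0 ≤ x) :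
    IsLUB {r : ℝ | ∃ y : X, |y| ≤ x ∧ f y - g y = r} (f x + g x - 2 * m x) := by
  constructor
  · rintro _ ⟨y, hyx, rfl⟩
    have hfy := h.isRieszHom_sub_left.monotone ((le_abs_self y).trans hyx)
    have hgy := h.isRieszHom_sub_right.monotone ((neg_le_abs y).trans hyx)
    simp only [LinearMap.sub_apply, map_neg] at hfy hgy
    linarith
  · intro b hb
    obtain ⟨w, hw, hwx, hm⟩ := h.exists_add_map_sub_eq x hx
    refine hb ⟨x - 2 • w, abs_le'.2 ⟨?_, ?_⟩, ?_⟩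
    · exact sub_le_self x (nsmul_nonneg hw 2)
    · rw [neg_sub, two_nsmul, sub_le_iff_le_add]
      exact add_le_add hwx hwx
    · rw [← hm]
      simp only [map_sub, map_add, two_nsmul]
      ring

end IsRieszInf

variable {f g : X →ₗ[ℝ] ℝ}

theorem isRieszInf_of_eq_smul {c : ℝ} (hf : IsRieszHom f) (hg : IsRieszHom g) (hc : c ≤ 1)
    (hgf : g = c • f) : IsRieszInf f g g where
  isRieszHom := hg
  isRieszHom_sub_left := by
    rw [show f - g = (1 - c) • f by rw [hgf]; module]
    exact hf.smul (sub_nonneg.2 hc)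
  isRieszHom_sub_right := by rw [sub_self]; exact .zero
  exists_add_map_sub_eq x hx := ⟨0, le_rfl, hx, by simp⟩

variable [CovariantClass X X (· + ·) (· ≤ ·)]

theorem isRieszInf_zero_of_disjoint (hf : IsRieszHom f) (hg : IsRieszHom g) {z : X}
    (hz : 0 ≤ z) (hfz : f z = 0) (hgz : g z ≠ 0) : IsRieszInf f g 0 where
  isRieszHom := .zero
  isRieszHom_sub_left := by rwa [sub_zero]
  isRieszHom_sub_right := by rwa [sub_zero]
  exists_add_map_sub_eq x hx := by
    obtain ⟨w, hw, hwx, hfw, hgw⟩ :=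
      hf.exists_le_map_eq_zero_map_eq hg hz hfz ((hg.map_nonneg hz).lt_of_ne' hgz) hx
    exact ⟨w, hw, hwx, by simp [hfw, hgw]⟩

theorem exists_isRieszInf (hf : IsRieszHom f) (hg : IsRieszHom g) : ∃ m, IsRieszInf f g m := by
  by_cases hfg : ∀ z, 0 ≤ z → f z = 0 → g z = 0
  · obtain ⟨c, hgf⟩ := LinearMap.exists_eq_smul_of_ker_le (hf.ker_le_ker hg hfg)
    rcases le_total c 1 with hc | hc
    · exact ⟨g, isRieszInf_of_eq_smul hf hg hc hgf⟩
    · have hfg : f = c⁻¹ • g := by rw [hgf, inv_smul_smul₀ (zero_lt_one.trans_le hc).ne']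
      exact ⟨f, (isRieszInf_of_eq_smul hg hf (inv_le_one_of_one_le₀ hc) hfg).symm⟩
  · push Not at hfg
    obtain ⟨z, hz, hfz, hgz⟩ := hfg
    exact ⟨0, isRieszInf_zero_of_disjoint hf hg hz hfz hgz⟩

end

/-- For Riesz homomorphisms `f g : X → ℝ`, the modulus `|f - g|` in the order
dual equals `f + g - 2 (f ⊓ g)`, the infimum `f ⊓ g` is a Riesz homomorphism,
and the positive part `f - (f ⊓ g)` and negative part `g - (f ⊓ g)` of `f - g`
are Riesz homomorphisms.  The infimum `f ⊓ g` and the modulus are described by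
the Riesz–Kantorovich formulas. -/
theorem stmt10 {X : Type*} [Lattice X] [AddCommGroup X] [Module ℝ X]
    [CovariantClass X X (· + ·) (· ≤ ·)]
    (f g : X →ₗ[ℝ] ℝ)
    (hf : ∀ x y : X, f (x ⊔ y) = f x ⊔ f y)
    (hg : ∀ x y : X, g (x ⊔ y) = g x ⊔ g y) :
    ∃ m : X →ₗ[ℝ] ℝ,
      -- `m` is the infimum `f ⊓ g` in the order dual (Riesz–Kantorovich formula)
      (∀ x : X, 0 ≤ x → IsGLB {r : ℝ | ∃ y : X, 0 ≤ y ∧ y ≤ x ∧ f y + g (x - y) = r} (m x)) ∧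
      -- `f ⊓ g` is a Riesz homomorphism
      (∀ x y : X, m (x ⊔ y) = m x ⊔ m y) ∧
      -- `|f - g| = f + g - 2 (f ⊓ g)` via the Riesz–Kantorovich formula for the modulus
      (∀ x : X, 0 ≤ x →
        IsLUB {r : ℝ | ∃ y : X, |y| ≤ x ∧ f y - g y = r} (f x + g x - 2 * m x)) ∧
      -- the positive and negative parts of `f - g` are Riesz homomorphisms
      (∀ x y : X, (f - m) (x ⊔ y) = (f - m) x ⊔ (f - m) y) ∧
      (∀ x y : X, (g - m) (x ⊔ y) = (g - m) x ⊔ (g - m) y) := by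
  obtain ⟨m, hm⟩ := exists_isRieszInf hf hg
  exact ⟨m, fun _ => hm.isGLB, hm.isRieszHom, fun _ => hm.isLUB, hm.isRieszHom_sub_left,
    hm.isRieszHom_sub_right⟩
end
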